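/- Let E and F be Banach spaces, p ≥ 1, and suppose F contains closed infinite-dimensional subspaces F_1, F_2, ... spanned by disjoint blocks of an unconditional basic sequence with constant ϱ (so that ‖y_i‖ ≤ ϱ‖y_i + y_j‖ whenever y_i ∈ F_i, y_j ∈ F_j, i ≠ j). Suppose for each j there is an operator u_j ∈ L(E;F_j) \ Π_p(E;F_j), and let ũ_j : E → F be u_j followed by the inclusion F_j ↪ F. Then every nonzero finite linear combination of the ũ_j fails to be absolutely p-summing, and the ũ_j are linearly independent; hence span{ũ_j} witnesses lineability of L(E;F) \ Π_p(E;F). -/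

import Mathlib

open scoped ENNReal ZeroAtInfty

/-- `u : E →L[ℝ] F` is absolutely `p`-summing: there is `C ≥ 0` with
`∑ ‖u (x j)‖^p ≤ C · sup_{‖φ‖ ≤ 1} ∑ |φ (x j)|^p` for all finite families `x`. -/
def AbsPSumming (p : ℝ) {E F : Type*} [NormedAddCommGroup E] [NormedSpace ℝ E]
    [NormedAddCommGroup F] [NormedSpace ℝ F] (u : E →L[ℝ] F) : Prop :=
  ∃ C : ℝ, 0 ≤ C ∧ ∀ (n : ℕ) (x : Fin n → E),
    ∑ j, ‖u (x j)‖ ^ p ≤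
      C * ⨆ φ : {φ : E →L[ℝ] ℝ // ‖φ‖ ≤ 1}, ∑ j, ‖φ.1 (x j)‖ ^ p

/-- `u : E →L[ℝ] F` is absolutely `(q,1)`-summing. -/
def AbsQ1Summing (q : ℝ) {E F : Type*} [NormedAddCommGroup E] [NormedSpace ℝ E]
    [NormedAddCommGroup F] [NormedSpace ℝ F] (u : E →L[ℝ] F) : Prop :=
  ∃ C : ℝ, 0 ≤ C ∧ ∀ (n : ℕ) (x : Fin n → E),
    ∑ j, ‖u (x j)‖ ^ q ≤
      C * (⨆ φ : {φ : E →L[ℝ] ℝ // ‖φ‖ ≤ 1}, ∑ j, ‖φ.1 (x j)‖) ^ q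

/-- A subset `S` of a vector space is lineable if `S ∪ {0}` contains an
infinite-dimensional linear subspace. -/
def Lineable (𝕜 : Type*) {X : Type*} [Field 𝕜] [AddCommGroup X] [Module 𝕜 X] (S : Set X) : Prop :=
  ∃ V : Submodule 𝕜 X, ¬ Module.Finite 𝕜 V ∧ (V : Set X) ⊆ S ∪ {0}

/-- Superreflexivity, via Enflo's theorem: `X` admits an equivalent uniformly convex norm. -/
def SuperReflexive (X : Type*) [NormedAddCommGroup X] [NormedSpace ℝ X] : Prop :=
  ∃ N : X → ℝ, (∀ x, 0 ≤ N x) ∧ (∀ x, N x = 0 ↔ x = 0) ∧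
    (∀ (c : ℝ) (x : X), N (c • x) = |c| * N x) ∧ (∀ x y, N (x + y) ≤ N x + N y) ∧
    (∃ b c : ℝ, 0 < b ∧ 0 < c ∧ ∀ x, b * ‖x‖ ≤ N x ∧ N x ≤ c * ‖x‖) ∧
    (∀ ε : ℝ, 0 < ε → ∃ δ : ℝ, 0 < δ ∧ ∀ x y, N x ≤ 1 → N y ≤ 1 →
      ε ≤ N (x - y) → N (x + y) ≤ 2 - δ)

/-- `e` is an unconditional basic sequence with unconditional constant `ϱ`:
expansions are unique and sign changes of a convergent expansion converge,
with norm at most `ϱ` times the original. -/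
def IsUncondBasicSeq {ι X : Type*} [NormedAddCommGroup X] [NormedSpace ℝ X]
    (e : ι → X) (ϱ : ℝ) : Prop :=
  (∀ a : ι → ℝ, HasSum (fun n => a n • e n) 0 → ∀ n, a n = 0) ∧
  (∀ (a : ι → ℝ) (x : X), HasSum (fun n => a n • e n) x →
    ∀ ε : ι → ℝ, (∀ n, ε n = 1 ∨ ε n = -1) →
      ∃ y, HasSum (fun n => (ε n * a n) • e n) y ∧ ‖y‖ ≤ ϱ * ‖x‖)

/-- `e` is an unconditional Schauder basis of `X` with unconditional constant `ϱ`. -/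
def IsUncondBasis {X : Type*} [NormedAddCommGroup X] [NormedSpace ℝ X]
    (e : ℕ → X) (ϱ : ℝ) : Prop :=
  IsUncondBasicSeq e ϱ ∧ ∀ x : X, ∃ a : ℕ → ℝ, HasSum (fun n => a n • e n) x

/-- The parameter `μ_{E,(x_n)} = inf {t : (a_j) ∈ ℓ_t whenever ∑ a_j x_j converges}`,
computed in `ℝ≥0∞` (so that it is `∞` when no such `t` exists). -/
noncomputable def muPar {ι E : Type*} [NormedAddCommGroup E] [NormedSpace ℝ E]
    (x : ι → E) : ℝ≥0∞ :=
  sInf {s : ℝ≥0∞ | ∃ t : ℝ, s = ENNReal.ofReal t ∧ 0 < t ∧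
    ∀ a : ι → ℝ, (∃ y, HasSum (fun j => a j • x j) y) → Summable fun j => |a j| ^ t}

/-- `F` has cotype `s`. -/
def HasCotype (s : ℝ) (F : Type*) [NormedAddCommGroup F] [NormedSpace ℝ F] : Prop :=
  ∃ C : ℝ, 0 < C ∧ ∀ (n : ℕ) (y : Fin n → F),
    (∑ i, ‖y i‖ ^ s) ^ (1 / s) ≤
      C * ((∑ ε : Fin n → Bool, ‖∑ i, (if ε i then (1:ℝ) else -1) • y i‖ ^ 2) / 2 ^ n)
        ^ (1 / 2 : ℝ)

/-- `cot F = inf {s ≥ 2 : F has cotype s}`, computed in `ℝ≥0∞`. -/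
noncomputable def cotPar (F : Type*) [NormedAddCommGroup F] [NormedSpace ℝ F] : ℝ≥0∞ :=
  sInf {s : ℝ≥0∞ | ∃ r : ℝ, s = ENNReal.ofReal r ∧ 2 ≤ r ∧ HasCotype r F}

/-! Write a vector as `∑ y_k` with `y_k` in the block subspaces. Reversing the signs of the basis
coefficients outside the block `A k₀` turns it into `y_{k₀} - ∑_{k ≠ k₀} y_k`, so unconditionality
gives `2 ‖y_{k₀}‖ ≤ (1 + ϱ) ‖∑ y_k‖`, first on the spans of the blocks and then, by continuity, on
their closures. Hence `‖u_{k₀} x‖ ≤ (1 + ϱ) / (2 |a_{k₀}|) ‖(∑ a_k ũ_k) x‖`, so a `p`-summing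
combination would force `u_{k₀}` to be `p`-summing. Since `0` is `p`-summing, no nontrivial
combination vanishes, which gives linear independence and lineability. -/

theorem Finsupp.linearCombination_smul_eq_smul_of_mem_supported {α R M : Type*}
    [CommSemiring R] [AddCommMonoid M] [Module R M] {v : α → M} {ε : α → R} {σ : R}
    {B : Set α} {l : α →₀ R} (hl : l ∈ Finsupp.supported R R B) (hε : ∀ i ∈ B, ε i = σ) :
    Finsupp.linearCombination R (fun i => ε i • v i) l = σ • Finsupp.linearCombination R v l := by
  simp only [Finsupp.linearCombination_apply, Finsupp.sum, Finset.smul_sum]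
  refine Finset.sum_congr rfl fun i hi => ?_
  rw [hε i (hl hi), smul_comm]

namespace IsUncondBasicSeq

variable {κ F : Type*} [NormedAddCommGroup F] [NormedSpace ℝ F] {e : κ → F} {ϱ : ℝ}

theorem norm_linearCombination_sign_le (he : IsUncondBasicSeq e ϱ) {ε : κ → ℝ}
    (hε : ∀ i, ε i = 1 ∨ ε i = -1) (l : κ →₀ ℝ) :
    ‖Finsupp.linearCombination ℝ (fun i => ε i • e i) l‖ ≤
      ϱ * ‖Finsupp.linearCombination ℝ e l‖ := by
  have hsum : ∀ v : κ → F, HasSum (fun i => l i • v i) (Finsupp.linearCombination ℝ v l) :=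
    fun v => by
      rw [Finsupp.linearCombination_apply]
      exact hasSum_sum_of_ne_finset_zero fun i hi => by
        rw [Finsupp.notMem_support_iff.mp hi, zero_smul]
  obtain ⟨y, hy, hyle⟩ := he.2 l _ (hsum e) ε hε
  have : y = Finsupp.linearCombination ℝ (fun i => ε i • e i) l :=
    hy.unique (by simpa only [smul_smul, mul_comm] using hsum fun i => ε i • e i)
  rwa [← this]

theorem norm_sub_le_of_mem_span (he : IsUncondBasicSeq e ϱ) {B C : Set κ} (hBC : Disjoint B C)
    {y z : F} (hy : y ∈ Submodule.span ℝ (e '' B)) (hz : z ∈ Submodule.span ℝ (e '' C)) :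
    ‖y - z‖ ≤ ϱ * ‖y + z‖ := by
  classical
  obtain ⟨l, hl, rfl⟩ := (Finsupp.mem_span_image_iff_linearCombination ℝ).mp hy
  obtain ⟨m, hm, rfl⟩ := (Finsupp.mem_span_image_iff_linearCombination ℝ).mp hz
  set ε : κ → ℝ := fun i => if i ∈ B then 1 else -1
  have hεB : ∀ i ∈ B, ε i = 1 := fun i hi => if_pos hi
  have hεC : ∀ i ∈ C, ε i = -1 := fun i hi => if_neg (hBC.notMem_of_mem_right hi)
  have hflip := he.norm_linearCombination_sign_le (ε := ε) (fun i => by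
    by_cases hi : i ∈ B <;> simp [ε, hi]) (l + m)
  rwa [map_add, map_add, Finsupp.linearCombination_smul_eq_smul_of_mem_supported hl hεB,
    Finsupp.linearCombination_smul_eq_smul_of_mem_supported hm hεC, one_smul, neg_one_smul,
    ← sub_eq_add_neg] at hflip

theorem norm_sub_le_of_mem_closure_span (he : IsUncondBasicSeq e ϱ) {B C : Set κ}
    (hBC : Disjoint B C) {y z : F} (hy : y ∈ (Submodule.span ℝ (e '' B)).topologicalClosure)
    (hz : z ∈ (Submodule.span ℝ (e '' C)).topologicalClosure) :
    ‖y - z‖ ≤ ϱ * ‖y + z‖ := by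
  rw [← SetLike.mem_coe, Submodule.topologicalClosure_coe] at hy hz
  have := map_mem_closure₂ (f := fun y z : F => ϱ * ‖y + z‖ - ‖y - z‖) (u := Set.Ici 0)
    (by fun_prop) hy hz fun a ha b hb => sub_nonneg.mpr (he.norm_sub_le_of_mem_span hBC ha hb)
  simpa [isClosed_Ici.closure_eq] using this

theorem two_mul_norm_le_norm_sum (he : IsUncondBasicSeq e ϱ) {ι : Type*} {A : ι → Set κ}
    (hA : Pairwise fun i j => Disjoint (A i) (A j)) {s : Finset ι} {y : ι → F}
    (hy : ∀ k ∈ s, y k ∈ (Submodule.span ℝ (e '' A k)).topologicalClosure)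
    {k₀ : ι} (hk₀ : k₀ ∈ s) :
    2 * ‖y k₀‖ ≤ (1 + ϱ) * ‖∑ k ∈ s, y k‖ := by
  classical
  set r := ∑ k ∈ s.erase k₀, y k
  have hr : r ∈ (Submodule.span ℝ (e '' (A k₀)ᶜ)).topologicalClosure := by
    refine Submodule.sum_mem _ fun k hk => ?_
    refine Submodule.topologicalClosure_mono (Submodule.span_mono (Set.image_mono ?_))
      (hy k (s.mem_of_mem_erase hk))
    exact Set.subset_compl_iff_disjoint_left.mpr (hA (s.ne_of_mem_erase hk).symm)
  have hsub := he.norm_sub_le_of_mem_closure_span disjoint_compl_right (hy k₀ hk₀) hr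
  rw [← Finset.add_sum_erase s y hk₀]
  calc 2 * ‖y k₀‖ = ‖(y k₀ + r) + (y k₀ - r)‖ := by
        rw [add_add_sub_cancel, ← two_smul ℝ, norm_smul, Real.norm_two]
    _ ≤ (1 + ϱ) * ‖y k₀ + r‖ := by linarith [norm_add_le (y k₀ + r) (y k₀ - r)]

end IsUncondBasicSeq

section AbsPSumming

variable {E F G : Type*} [NormedAddCommGroup E] [NormedSpace ℝ E]
  [NormedAddCommGroup F] [NormedSpace ℝ F] [NormedAddCommGroup G] [NormedSpace ℝ G] {p : ℝ}

theorem absPSumming_zero (hp : p ≠ 0) : AbsPSumming p (0 : E →L[ℝ] F) :=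
  ⟨0, le_rfl, fun n x => by simp [Real.zero_rpow hp]⟩

theorem AbsPSumming.of_norm_le_mul {v : E →L[ℝ] F} (hv : AbsPSumming p v) (hp : 0 ≤ p)
    {u : E →L[ℝ] G} (c : ℝ) (huv : ∀ x, ‖u x‖ ≤ c * ‖v x‖) : AbsPSumming p u := by
  obtain ⟨C, hC, hCv⟩ := hv
  set c' := max c 0
  have hc' : 0 ≤ c' := le_max_right c 0
  refine ⟨c' ^ p * C, by positivity, fun n x => ?_⟩
  calc ∑ j, ‖u (x j)‖ ^ p
      ≤ ∑ j, (c' * ‖v (x j)‖) ^ p := Finset.sum_le_sum fun j _ =>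
        Real.rpow_le_rpow (norm_nonneg _)
          ((huv (x j)).trans (by gcongr; exact le_max_left c 0)) hp
    _ = c' ^ p * ∑ j, ‖v (x j)‖ ^ p := by
        simp only [Real.mul_rpow hc' (norm_nonneg _), Finset.mul_sum]
    _ ≤ c' ^ p * C * ⨆ φ : {φ : E →L[ℝ] ℝ // ‖φ‖ ≤ 1}, ∑ j, ‖φ.1 (x j)‖ ^ p := by
        rw [mul_assoc]; gcongr; exact hCv n x

end AbsPSumming

theorem IsUncondBasicSeq.not_absPSumming_sum {κ ι E F : Type*} [NormedAddCommGroup E]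
    [NormedSpace ℝ E] [NormedAddCommGroup F] [NormedSpace ℝ F] {e : κ → F} {ϱ : ℝ}
    (he : IsUncondBasicSeq e ϱ) {A : ι → Set κ} (hA : Pairwise fun i j => Disjoint (A i) (A j))
    {W : ι → Submodule ℝ F} (hW : ∀ k, W k ≤ (Submodule.span ℝ (e '' A k)).topologicalClosure)
    {p : ℝ} (hp : 0 ≤ p) (u : (k : ι) → E →L[ℝ] W k) (s : Finset ι) (a : ι → ℝ) {k₀ : ι}
    (hk₀ : k₀ ∈ s) (ha : a k₀ ≠ 0) (hu : ¬ AbsPSumming p (u k₀)) :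
    ¬ AbsPSumming p (∑ k ∈ s, a k • (W k).subtypeL.comp (u k)) := by
  refine fun hsum => hu (hsum.of_norm_le_mul hp ((1 + ϱ) / (2 * |a k₀|)) fun x => ?_)
  have hblock := he.two_mul_norm_le_norm_sum hA (s := s) (y := fun k => a k • (u k x : F))
    (fun k _ => hW k (Submodule.smul_mem _ _ (u k x).2)) hk₀
  simp only [norm_smul, Real.norm_eq_abs, Submodule.norm_coe] at hblock
  rw [div_mul_eq_mul_div, le_div_iff₀ (by positivity)]
  simpa [mul_comm, mul_left_comm, mul_assoc] using hblock

theorem stmt_10_general {E F : Type*} [NormedAddCommGroup E] [NormedSpace ℝ E]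
    [NormedAddCommGroup F] [NormedSpace ℝ F]
    (p : ℝ) (hp : 1 ≤ p)
    (e : ℕ → F) (ϱ : ℝ) (hbasic : IsUncondBasicSeq e ϱ)
    (A : ℕ → Set ℕ) (hA : Pairwise fun i j => Disjoint (A i) (A j))
    (Fsub : ℕ → Submodule ℝ F)
    (hFdef : ∀ j, Fsub j = (Submodule.span ℝ (e '' A j)).topologicalClosure)
    (u : (j : ℕ) → (E →L[ℝ] Fsub j)) (hu : ∀ j, ¬ AbsPSumming p (u j)) :
    (∀ (n : ℕ) (a : Fin n → ℝ), (∃ k, a k ≠ 0) →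
      ¬ AbsPSumming p (∑ k : Fin n, a k • ((Fsub k).subtypeL.comp (u k)))) ∧
    (LinearIndependent ℝ fun j : ℕ => (Fsub j).subtypeL.comp (u j)) ∧
    Lineable ℝ {v : E →L[ℝ] F | ¬ AbsPSumming p v} := by
  have hp0 : 0 < p := zero_lt_one.trans_le hp
  have hW : ∀ j, Fsub j ≤ (Submodule.span ℝ (e '' A j)).topologicalClosure :=
    fun j => (hFdef j).le
  have key := hbasic.not_absPSumming_sum hA hW hp0.le u
  have hindep : LinearIndependent ℝ fun j : ℕ => (Fsub j).subtypeL.comp (u j) := by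
    refine linearIndependent_iff'.mpr fun s a hs k hk => by_contra fun ha => ?_
    exact key s a hk ha (hu k) (hs ▸ absPSumming_zero hp0.ne')
  refine ⟨fun n a ⟨k, hk⟩ => ?_, hindep, ?_⟩
  · exact hbasic.not_absPSumming_sum (hA.comp_of_injective Fin.val_injective)
      (fun j => hW j) hp0.le (fun j => u j) Finset.univ a (Finset.mem_univ k) hk (hu k)
  refine ⟨Submodule.span ℝ (Set.range fun j => (Fsub j).subtypeL.comp (u j)), fun hfin => ?_,
    fun w hw => ?_⟩
  · have : Finite ℕ := (linearIndependent_span hindep).finite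
    exact not_finite ℕ
  obtain ⟨c, rfl⟩ := Finsupp.mem_span_range_iff_exists_finsupp.mp hw
  rcases eq_or_ne c 0 with rfl | hc
  · exact Or.inr (by simp)
  obtain ⟨k, hk⟩ := Finsupp.ne_iff.mp hc
  exact Or.inl (key c.support c (Finsupp.mem_support_iff.mpr hk) hk (hu k))

/-- suppose `F` contains closed infinite-dimensional subspaces
`F j` spanned by disjoint blocks of an unconditional basic sequence with constant
`ϱ`, so that `‖y‖ ≤ ϱ ‖y + z‖` for `y ∈ F i`, `z ∈ F j`, `i ≠ j`. If for each `j`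
there is `u j ∈ L(E;F j) \ Π_p(E;F j)` and `ũ j` is `u j` followed by the inclusion
`F j ↪ F`, then every nonzero finite linear combination of the `ũ j` fails to be
absolutely `p`-summing and the `ũ j` are linearly independent; hence their span
witnesses lineability of `L(E;F) \ Π_p(E;F)`. -/
theorem stmt_10 {E F : Type*} [NormedAddCommGroup E] [NormedSpace ℝ E] [CompleteSpace E]
    [NormedAddCommGroup F] [NormedSpace ℝ F] [CompleteSpace F]
    (p : ℝ) (hp : 1 ≤ p)
    (e : ℕ → F) (ϱ : ℝ) (hbasic : IsUncondBasicSeq e ϱ)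
    (A : ℕ → Set ℕ) (hA : Pairwise fun i j => Disjoint (A i) (A j))
    (Fsub : ℕ → Submodule ℝ F)
    (hFdef : ∀ j, Fsub j = (Submodule.span ℝ (e '' A j)).topologicalClosure)
    (hFinf : ∀ j, ¬ FiniteDimensional ℝ (Fsub j))
    (hϱ : ∀ i j, i ≠ j → ∀ y ∈ Fsub i, ∀ z ∈ Fsub j, ‖y‖ ≤ ϱ * ‖y + z‖)
    (u : (j : ℕ) → (E →L[ℝ] Fsub j)) (hu : ∀ j, ¬ AbsPSumming p (u j)) :
    (∀ (n : ℕ) (a : Fin n → ℝ), (∃ k, a k ≠ 0) →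
      ¬ AbsPSumming p (∑ k : Fin n, a k • ((Fsub k).subtypeL.comp (u k)))) ∧
    (LinearIndependent ℝ fun j : ℕ => (Fsub j).subtypeL.comp (u j)) ∧
    Lineable ℝ {v : E →L[ℝ] F | ¬ AbsPSumming p v} :=
  stmt_10_general p hp e ϱ hbasic A hA Fsub hFdef u hu
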